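/- Define the bounded sequence y : ℕ → ℝ by y_k = 2 if there exists an integer n ≥ 1 with 2^n ≤ k ≤ 2^n + n, and y_k = 1 otherwise. Then the Cesàro means (Cy)_n converge to 1 as n → ∞, but y is not almost convergent; in particular there exists a Banach limit B with B(y) ≠ 1. -/

import Mathlib

/-!
The window averages `(1/(m+1)) Σ_{k ≤ m} x (s m + k)` are positive normalised linear means whose
defect under the shift is `O(1/m)`, so their limit along any ultrafilter finer than `atTop` is a
Banach limit. Windows starting at `0` are the Cesàro means, which tend to `1` on `y` because only
`O(log² m)` of the first `m` indices lie in a block; windows starting at `2^m` lie inside a block,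
where `y = 2`. The two resulting Banach limits take the values `1` and `2` at `y`.
-/

open scoped BigOperators

/-- Membership in `l_∞`: the sequence is bounded. -/
def Bdd (x : ℕ → ℝ) : Prop := ∃ M : ℝ, ∀ n : ℕ, |x n| ≤ M

/-- The right shift `S` on sequences: `(Sx)_0 = 0`, `(Sx)_{n+1} = x_n`. -/
def Sfun (x : ℕ → ℝ) : ℕ → ℝ
  | 0 => 0
  | n + 1 => x n

/-- `B` is a Banach limit on `l_∞`: a positive, normalised, shift-invariant linear
functional. -/
def IsBanachLimit (B : (ℕ → ℝ) → ℝ) : Prop :=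
  (∀ x y : ℕ → ℝ, Bdd x → Bdd y → B (x + y) = B x + B y) ∧
  (∀ (c : ℝ) (x : ℕ → ℝ), Bdd x → B (c • x) = c * B x) ∧
  (∀ x : ℕ → ℝ, Bdd x → 0 ≤ x → 0 ≤ B x) ∧
  B (fun _ => (1 : ℝ)) = 1 ∧
  (∀ x : ℕ → ℝ, Bdd x → B (Sfun x) = B x)

/-- The Cesàro operator `C` on sequences: `(Cx)_n = (1/(n+1)) Σ_{k=0}^n x_k`. -/
noncomputable def Ces (x : ℕ → ℝ) : ℕ → ℝ := fun n =>
  (∑ k ∈ Finset.range (n + 1), x k) / ((n : ℝ) + 1)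

open scoped Classical in
/-- The sequence `y` equal to `2` on the blocks `[2^n, 2^n + n]` (`n ≥ 1`) and `1`
elsewhere. -/
noncomputable def yseq : ℕ → ℝ := fun k =>
  if ∃ n : ℕ, 1 ≤ n ∧ 2 ^ n ≤ k ∧ k ≤ 2 ^ n + n then 2 else 1

open Filter Topology Finset

lemma tendsto_limUnder_of_abs_le {α : Type*} (U : Ultrafilter α) {f : α → ℝ} {M : ℝ}
    (hf : ∀ a, |f a| ≤ M) : Tendsto f U (𝓝 (limUnder (U : Filter α) f)) := by
  obtain ⟨c, -, hc⟩ := (isCompact_Icc (a := -M) (b := M)).ultrafilter_le_nhds' (U.map f)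
    (Ultrafilter.mem_map.2 (univ_mem' fun a => abs_le.1 (hf a)))
  exact tendsto_nhds_limUnder ⟨c, hc⟩

lemma abs_Sfun_le {x : ℕ → ℝ} {M : ℝ} (hx : ∀ n, |x n| ≤ M) (n : ℕ) :
    |Sfun x n| ≤ M := by
  cases n with
  | zero => simpa [Sfun] using (abs_nonneg _).trans (hx 0)
  | succ n => exact hx n

lemma bdd_add {x y : ℕ → ℝ} : Bdd x → Bdd y → Bdd (x + y)
  | ⟨M, hM⟩, ⟨N, hN⟩ =>
    ⟨M + N, fun n => (abs_add_le _ _).trans (add_le_add (hM n) (hN n))⟩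

lemma bdd_smul (c : ℝ) {x : ℕ → ℝ} : Bdd x → Bdd (c • x)
  | ⟨M, hM⟩ => ⟨|c| * M, fun n => by
      rw [Pi.smul_apply, smul_eq_mul, abs_mul]
      exact mul_le_mul_of_nonneg_left (hM n) (abs_nonneg c)⟩

lemma bdd_Sfun {x : ℕ → ℝ} : Bdd x → Bdd (Sfun x)
  | ⟨M, hM⟩ => ⟨M, abs_Sfun_le hM⟩

lemma Nat.tendsto_log_atTop {b : ℕ} (hb : 1 < b) : Tendsto (Nat.log b) atTop atTop :=
  tendsto_atTop_atTop.2 fun n => ⟨b ^ n, fun _ h => Nat.le_log_of_pow_le hb h⟩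

noncomputable def windowAvg (s : ℕ → ℕ) (m : ℕ) (x : ℕ → ℝ) : ℝ :=
  (∑ k ∈ range (m + 1), x (s m + k)) / (m + 1)

section windowAvg

variable (s : ℕ → ℕ) (m : ℕ)

lemma windowAvg_zero_eq_ces (x : ℕ → ℝ) : windowAvg (fun _ => 0) m x = Ces x m := by
  simp only [windowAvg, Ces, zero_add]

lemma windowAvg_add (x y : ℕ → ℝ) :
    windowAvg s m (x + y) = windowAvg s m x + windowAvg s m y := by
  simp only [windowAvg, Pi.add_apply, sum_add_distrib, add_div]

lemma windowAvg_smul (c : ℝ) (x : ℕ → ℝ) :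
    windowAvg s m (c • x) = c * windowAvg s m x := by
  simp only [windowAvg, Pi.smul_apply, smul_eq_mul, ← mul_sum, mul_div_assoc]

lemma windowAvg_nonneg {x : ℕ → ℝ} (hx : 0 ≤ x) : 0 ≤ windowAvg s m x :=
  div_nonneg (sum_nonneg fun k _ => hx _) (by positivity)

lemma windowAvg_const (c : ℝ) : windowAvg s m (fun _ => c) = c := by
  simp only [windowAvg, sum_const, card_range, nsmul_eq_mul]
  push_cast
  field_simp

lemma abs_windowAvg_le {x : ℕ → ℝ} {M : ℝ} (hx : ∀ n, |x n| ≤ M) :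
    |windowAvg s m x| ≤ M := by
  rw [windowAvg, abs_div, abs_of_pos (m.cast_add_one_pos (α := ℝ)),
    div_le_iff₀ (by positivity)]
  calc |∑ k ∈ range (m + 1), x (s m + k)| ≤ ∑ k ∈ range (m + 1), |x (s m + k)| :=
        abs_sum_le_sum_abs _ _
    _ ≤ ∑ k ∈ range (m + 1), M := sum_le_sum fun k _ => hx _
    _ = M * (m + 1) := by simp [mul_comm]

lemma sum_window_Sfun_sub (x : ℕ → ℝ) (t : ℕ) :
    ∑ k ∈ range (m + 1), Sfun x (t + k) - ∑ k ∈ range (m + 1), x (t + k) =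
      Sfun x t - x (t + m) := by
  have hshift : ∀ k, Sfun x (t + (k + 1)) = x (t + k) := fun k => rfl
  rw [sum_range_succ', sum_range_succ]
  simp only [hshift, add_zero]
  ring

lemma abs_windowAvg_Sfun_sub_le {x : ℕ → ℝ} {M : ℝ} (hx : ∀ n, |x n| ≤ M) :
    |windowAvg s m (Sfun x) - windowAvg s m x| ≤ 2 * M / (m + 1) := by
  rw [windowAvg, windowAvg, ← sub_div, sum_window_Sfun_sub, abs_div,
    abs_of_pos (m.cast_add_one_pos (α := ℝ))]
  gcongr
  calc |Sfun x (s m) - x (s m + m)| ≤ |Sfun x (s m)| + |x (s m + m)| := abs_sub _ _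
    _ ≤ 2 * M := by linarith [abs_Sfun_le hx (s m), hx (s m + m)]

end windowAvg

noncomputable def windowBanachLimit (s : ℕ → ℕ) (x : ℕ → ℝ) : ℝ :=
  limUnder (Ultrafilter.of (atTop : Filter ℕ) : Filter ℕ) fun m => windowAvg s m x

section windowBanachLimit

variable (s : ℕ → ℕ)

lemma tendsto_windowBanachLimit {x : ℕ → ℝ} (hx : Bdd x) :
    Tendsto (fun m => windowAvg s m x) (Ultrafilter.of (atTop : Filter ℕ))
      (𝓝 (windowBanachLimit s x)) :=
  let ⟨_, hM⟩ := hx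
  tendsto_limUnder_of_abs_le _ fun m => abs_windowAvg_le s m hM

lemma windowBanachLimit_eq_of_tendsto {x : ℕ → ℝ} {a : ℝ}
    (h : Tendsto (fun m => windowAvg s m x) atTop (𝓝 a)) : windowBanachLimit s x = a :=
  (h.mono_left (Ultrafilter.of_le _)).limUnder_eq

lemma tendsto_windowAvg_Sfun_sub {x : ℕ → ℝ} (hx : Bdd x) :
    Tendsto (fun m => windowAvg s m (Sfun x) - windowAvg s m x) atTop (𝓝 0) := by
  obtain ⟨M, hM⟩ := hx
  refine squeeze_zero_norm (fun m => abs_windowAvg_Sfun_sub_le s m hM) ?_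
  simpa only [mul_one_div, mul_zero] using
    (tendsto_one_div_add_atTop_nhds_zero_nat (𝕜 := ℝ)).const_mul (2 * M)

theorem isBanachLimit_windowBanachLimit : IsBanachLimit (windowBanachLimit s) := by
  refine ⟨fun x y hx hy => ?_, fun c x hx => ?_, fun x hx hx0 => ?_, ?_, fun x hx => ?_⟩
  · refine tendsto_nhds_unique (tendsto_windowBanachLimit s (bdd_add hx hy)) ?_
    simpa only [windowAvg_add] using
      (tendsto_windowBanachLimit s hx).add (tendsto_windowBanachLimit s hy)
  · refine tendsto_nhds_unique (tendsto_windowBanachLimit s (bdd_smul c hx)) ?_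
    simpa only [windowAvg_smul] using (tendsto_windowBanachLimit s hx).const_mul c
  · exact ge_of_tendsto' (tendsto_windowBanachLimit s hx) fun m => windowAvg_nonneg s m hx0
  · exact windowBanachLimit_eq_of_tendsto s (by simp only [windowAvg_const, tendsto_const_nhds])
  · refine tendsto_nhds_unique (tendsto_windowBanachLimit s (bdd_Sfun hx)) ?_
    simpa only [sub_add_cancel, zero_add] using
      ((tendsto_windowAvg_Sfun_sub s hx).mono_left (Ultrafilter.of_le _)).add
        (tendsto_windowBanachLimit s hx)

end windowBanachLimit

lemma sum_range_yseq (m : ℕ) :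
    ∑ k ∈ range (m + 1), yseq k = m + 1 + #{k ∈ range (m + 1) | yseq k = 2} := by
  have hy : ∀ k, yseq k = 1 + if yseq k = 2 then 1 else 0 := fun k => by
    unfold yseq; split_ifs <;> norm_num at *
  rw [sum_congr rfl fun k _ => hy k]
  simp only [sum_add_distrib, sum_const, card_range, nsmul_eq_mul, mul_one, sum_boole]
  push_cast
  ring

lemma card_yseq_eq_two_le (m : ℕ) :
    #{k ∈ range (m + 1) | yseq k = 2} ≤ Nat.log 2 m ^ 2 + Nat.log 2 m := by
  set L := Nat.log 2 m
  have hsub : {k ∈ range (m + 1) | yseq k = 2} ⊆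
      (Icc 1 L).biUnion fun n => Icc (2 ^ n) (2 ^ n + n) := by
    intro k hk
    obtain ⟨hkm, hk2⟩ := mem_filter.1 hk
    unfold yseq at hk2
    split_ifs at hk2 with hblock
    · obtain ⟨n, hn, hnk, hkn⟩ := hblock
      exact mem_biUnion.2 ⟨n, mem_Icc.2 ⟨hn, Nat.le_log_of_pow_le one_lt_two (by
        rw [mem_range] at hkm; omega)⟩, mem_Icc.2 ⟨hnk, hkn⟩⟩
    · norm_num at hk2
  calc #{k ∈ range (m + 1) | yseq k = 2}
      ≤ ∑ n ∈ Icc 1 L, #(Icc (2 ^ n) (2 ^ n + n)) := (card_le_card hsub).trans card_biUnion_le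
    _ ≤ ∑ n ∈ Icc 1 L, (L + 1) := sum_le_sum fun n hn => by
        rw [Nat.card_Icc]; have := (mem_Icc.1 hn).2; omega
    _ = L ^ 2 + L := by rw [sum_const, Nat.card_Icc, add_tsub_cancel_right, smul_eq_mul]; ring

lemma tendsto_ces_yseq : Tendsto (Ces yseq) atTop (𝓝 1) := by
  have hces : ∀ m, Ces yseq m - 1 = #{k ∈ range (m + 1) | yseq k = 2} / (m + 1 : ℝ) :=
    fun m => by
      rw [Ces, sum_range_yseq, add_div, div_self m.cast_add_one_pos.ne']
      ring
  have hle : ∀ m,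
      Ces yseq m - 1 ≤ ((Nat.log 2 m : ℝ) ^ 2 + Nat.log 2 m) / 2 ^ Nat.log 2 m := by
    intro m
    rw [hces]
    gcongr
    · exact_mod_cast card_yseq_eq_two_le m
    · exact_mod_cast Nat.pow_log_le_add_one 2 m
  have hlim : Tendsto (fun L : ℕ => ((L : ℝ) ^ 2 + L) / 2 ^ L) atTop (𝓝 0) := by
    simpa only [add_div, pow_one, add_zero] using
      (tendsto_pow_const_div_const_pow_of_one_lt 2 one_lt_two).add
        (tendsto_pow_const_div_const_pow_of_one_lt 1 one_lt_two)
  have hsub : Tendsto (fun m => Ces yseq m - 1) atTop (𝓝 0) :=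
    squeeze_zero (fun m => by rw [hces]; positivity) hle
      (hlim.comp (Nat.tendsto_log_atTop one_lt_two))
  simpa using hsub.add_const 1

lemma windowAvg_pow_two_yseq {m : ℕ} (hm : 1 ≤ m) : windowAvg (2 ^ ·) m yseq = 2 := by
  have hwin : ∀ k ∈ range (m + 1), yseq (2 ^ m + k) = 2 := fun k hk => by
    rw [yseq, if_pos ⟨m, hm, Nat.le_add_right _ _, by rw [mem_range] at hk; omega⟩]
  calc windowAvg (2 ^ ·) m yseq = windowAvg (2 ^ ·) m (fun _ => 2) := by
        simp only [windowAvg, sum_congr rfl hwin]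
    _ = 2 := windowAvg_const _ m 2

theorem stmt_16 :
    Filter.Tendsto (Ces yseq) Filter.atTop (nhds 1) ∧
    (¬ ∃ a : ℝ, ∀ B : (ℕ → ℝ) → ℝ, IsBanachLimit B → B yseq = a) ∧
    (∃ B : (ℕ → ℝ) → ℝ, IsBanachLimit B ∧ B yseq ≠ 1) := by
  have hCes : windowBanachLimit (fun _ => 0) yseq = 1 :=
    windowBanachLimit_eq_of_tendsto _ (by simpa only [windowAvg_zero_eq_ces] using tendsto_ces_yseq)
  have hBlocks : windowBanachLimit (2 ^ ·) yseq = 2 :=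
    windowBanachLimit_eq_of_tendsto _ <| tendsto_const_nhds.congr' <|
      (eventually_ge_atTop 1).mono fun _ hm => (windowAvg_pow_two_yseq hm).symm
  refine ⟨tendsto_ces_yseq, fun ⟨a, ha⟩ => ?_,
    _, isBanachLimit_windowBanachLimit _, by rw [hBlocks]; norm_num⟩
  have h1 := ha _ (isBanachLimit_windowBanachLimit (fun _ => 0))
  have h2 := ha _ (isBanachLimit_windowBanachLimit (2 ^ ·))
  linarith
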